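/- Let T = {C₁ ⊑ D₁, …, Cₙ ⊑ Dₙ} be a terminology, R a set of role inclusion axioms, and C, D SHIQ-concepts. Let C_T be the conjunction of the concepts ¬Cᵢ ⊔ Dᵢ over all axioms of T, let U be a transitive role name not occurring in T, C, D, or R, and let R_U = R ∪ {R ⊑ U, Inv(R) ⊑ U : R occurs in T, C, D, or R}. Then D subsumes C with respect to T and R⁺ if and only if C ⊓ ¬D ⊓ C_T ⊓ ∀U.C_T is unsatisfiable with respect to R_U⁺. -/

import Mathlib

/-- SHIQ-roles: role names (indexed by ℕ) and their inverses. -/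
inductive Role where
  | atom : ℕ → Role
  | inv  : ℕ → Role
deriving DecidableEq

/-- The function `Inv` on roles: `Inv(R) = R⁻`, `Inv(R⁻) = R`. -/
def Role.Inv : Role → Role
  | .atom r => .inv r
  | .inv r  => .atom r

/-- The underlying role name of a (possibly inverse) role. -/
def Role.name : Role → ℕ
  | .atom r => r
  | .inv r  => r

/-- Concepts of the SHIQ family (with ⊤ and ⊥ for convenience). -/
inductive DLConcept where
  | top : DLConcept
  | bot : DLConcept
  | atom : ℕ → DLConcept
  | neg : DLConcept → DLConcept
  | and : DLConcept → DLConcept → DLConcept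
  | or : DLConcept → DLConcept → DLConcept
  | all : Role → DLConcept → DLConcept
  | ex : Role → DLConcept → DLConcept
  | atleast : ℕ → Role → DLConcept → DLConcept
  | atmost : ℕ → Role → DLConcept → DLConcept
deriving DecidableEq

/-- An interpretation: a (nonempty) domain, a valuation of concept names and
    of role names. -/
structure Interp where
  Dom : Type
  dom_nonempty : Nonempty Dom
  cI : ℕ → Set Dom
  rI : ℕ → Dom → Dom → Prop

/-- Semantics of (possibly inverse) roles. -/
def Interp.rSem (I : Interp) : Role → I.Dom → I.Dom → Prop
  | .atom r => I.rI r
  | .inv r  => fun x y => I.rI r y x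

/-- Semantics of concepts; number restrictions are interpreted by counting
    role successors (via cardinalities, so that infinite sets are handled
    correctly). -/
def Interp.cSem (I : Interp) : DLConcept → Set I.Dom
  | .top => Set.univ
  | .bot => ∅
  | .atom a => I.cI a
  | .neg C => (I.cSem C)ᶜ
  | .and C D => I.cSem C ∩ I.cSem D
  | .or C D => I.cSem C ∪ I.cSem D
  | .all R C => {x | ∀ y, I.rSem R x y → y ∈ I.cSem C}
  | .ex R C => {x | ∃ y, I.rSem R x y ∧ y ∈ I.cSem C}
  | .atleast n R C => {x | (n : Cardinal) ≤ Cardinal.mk {y // I.rSem R x y ∧ y ∈ I.cSem C}}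
  | .atmost n R C => {x | Cardinal.mk {y // I.rSem R x y ∧ y ∈ I.cSem C} ≤ (n : Cardinal)}

/-- `I.Good Rp`: the interpretation interprets every transitive role name
    (member of `Rp`) by a transitive relation. -/
def Interp.Good (I : Interp) (Rp : Set ℕ) : Prop :=
  ∀ r ∈ Rp, Transitive (I.rI r)

/-- The role hierarchy ⊑* generated by a finite set of role inclusion axioms:
    inverses are added and the transitive-reflexive closure is taken. -/
def SubRole (RIA : List (Role × Role)) : Role → Role → Prop :=
  Relation.ReflTransGen (fun R S => (R, S) ∈ RIA ∨ (R.Inv, S.Inv) ∈ RIA)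

/-- `I ⊨ R⁺`: the interpretation satisfies the role hierarchy. -/
def Interp.ModelsRH (I : Interp) (RIA : List (Role × Role)) : Prop :=
  ∀ R S, SubRole RIA R S → ∀ x y, I.rSem R x y → I.rSem S x y

/-- `Trans(R)`: a (possibly inverse) role is transitive iff its name is in `Rp`. -/
def RTrans (Rp : Set ℕ) : Role → Prop
  | .atom r => r ∈ Rp
  | .inv r  => r ∈ Rp

/-- A role is simple iff it is neither transitive nor has a transitive sub-role. -/
def SimpleRole (Rp : Set ℕ) (RIA : List (Role × Role)) (R : Role) : Prop :=
  ∀ S, SubRole RIA S R → ¬ RTrans Rp S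

/-- SHIQ-concepts: number restrictions occur only on simple roles. -/
def DLConcept.IsSHIQ (Rp : Set ℕ) (RIA : List (Role × Role)) : DLConcept → Prop
  | .top | .bot | .atom _ => True
  | .neg C => C.IsSHIQ Rp RIA
  | .and C D | .or C D => C.IsSHIQ Rp RIA ∧ D.IsSHIQ Rp RIA
  | .all _ C | .ex _ C => C.IsSHIQ Rp RIA
  | .atleast _ R C | .atmost _ R C => SimpleRole Rp RIA R ∧ C.IsSHIQ Rp RIA

/-- Satisfiability of a concept w.r.t. a role hierarchy. -/
def Satisfiable (Rp : Set ℕ) (RIA : List (Role × Role)) (C : DLConcept) : Prop :=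
  ∃ I : Interp, I.Good Rp ∧ I.ModelsRH RIA ∧ (I.cSem C).Nonempty

/-- Subsumption of concepts w.r.t. a role hierarchy. -/
def Subsumes (Rp : Set ℕ) (RIA : List (Role × Role)) (C D : DLConcept) : Prop :=
  ∀ I : Interp, I.Good Rp → I.ModelsRH RIA → I.cSem C ⊆ I.cSem D
/-- A terminology: a finite list of general concept inclusion axioms `C ⊑ D`. -/
abbrev Terminology := List (DLConcept × DLConcept)

/-- `I` is a model of the terminology `T`. -/
def Interp.ModelsT (I : Interp) (T : Terminology) : Prop :=
  ∀ p ∈ T, I.cSem p.1 ⊆ I.cSem p.2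

/-- Satisfiability w.r.t. a terminology and a role hierarchy. -/
def SatisfiableT (Rp : Set ℕ) (RIA : List (Role × Role)) (T : Terminology)
    (C : DLConcept) : Prop :=
  ∃ I : Interp, I.Good Rp ∧ I.ModelsRH RIA ∧ I.ModelsT T ∧ (I.cSem C).Nonempty

/-- Subsumption w.r.t. a terminology and a role hierarchy. -/
def SubsumesT (Rp : Set ℕ) (RIA : List (Role × Role)) (T : Terminology)
    (C D : DLConcept) : Prop :=
  ∀ I : Interp, I.Good Rp → I.ModelsRH RIA → I.ModelsT T → I.cSem C ⊆ I.cSem D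

/-- `C_T`: the conjunction of all `¬Cᵢ ⊔ Dᵢ` for `Cᵢ ⊑ Dᵢ ∈ T`. -/
def CT (T : Terminology) : DLConcept :=
  T.foldr (fun p acc => DLConcept.and (DLConcept.or (DLConcept.neg p.1) p.2) acc) DLConcept.top

/-- The role names occurring in a concept. -/
def DLConcept.roleNames : DLConcept → Finset ℕ
  | .top | .bot | .atom _ => ∅
  | .neg C => C.roleNames
  | .and C D | .or C D => C.roleNames ∪ D.roleNames
  | .all R C | .ex R C => insert R.name C.roleNames
  | .atleast _ R C | .atmost _ R C => insert R.name C.roleNames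

/-- The role names occurring in a terminology. -/
def termRoleNames (T : Terminology) : Finset ℕ :=
  T.foldr (fun p acc => p.1.roleNames ∪ p.2.roleNames ∪ acc) ∅

/-- The role names occurring in a set of role inclusion axioms. -/
def riaRoleNames (RIA : List (Role × Role)) : Finset ℕ :=
  RIA.foldr (fun p acc => insert p.1.name (insert p.2.name acc)) ∅

/-- `R_U`: the given role inclusion axioms extended with `R ⊑ U` and
    `Inv(R) ⊑ U` for every role (name) `r` in `names`. -/
def addU (RIA : List (Role × Role)) (names : Finset ℕ) (u : ℕ) : List (Role × Role) :=
  RIA ++ (names.sort (· ≤ ·)).map (fun r => (Role.atom r, Role.atom u))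
      ++ (names.sort (· ≤ ·)).map (fun r => (Role.inv r, Role.atom u))


/-! If `D` subsumes `C` w.r.t. `T`, a model of the internalised concept at `x` restricts to the
part of the domain reachable from `x` by `U`: since every role in play is a sub-role of the
transitive `U`, this part is closed under all relevant successors, so concepts keep their meaning,
and every element of it satisfies `C_T`, so it is a model of `T` in which `x ∈ C ⊓ ¬D`.
Conversely, in a model of `T` with `x ∈ C ⊓ ¬D`, reinterpreting the fresh name `U` as the
universal relation satisfies `R_U⁺` and `∀U.C_T` without changing anything else. -/

lemma mem_riaRoleNames {RIA : List (Role × Role)} {r : ℕ} :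
    r ∈ riaRoleNames RIA ↔ ∃ p ∈ RIA, r = p.1.name ∨ r = p.2.name := by
  induction RIA with
  | nil => simp [riaRoleNames]
  | cons p l ih =>
    simp only [riaRoleNames, List.foldr_cons, Finset.mem_insert] at ih ⊢
    rw [ih, List.exists_mem_cons_iff, or_assoc]

lemma CT_cons (p : DLConcept × DLConcept) (T : Terminology) :
    CT (p :: T) = .and (.or (.neg p.1) p.2) (CT T) := rfl

lemma roleNames_CT (T : Terminology) : (CT T).roleNames = termRoleNames T := by
  induction T with
  | nil => rfl
  | cons p T ih => exact congrArg (p.1.roleNames ∪ p.2.roleNames ∪ ·) ih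

lemma mem_addU_of_name_mem {RIA : List (Role × Role)} {names : Finset ℕ} {u : ℕ} {R : Role}
    (hR : R.name ∈ names) : (R, Role.atom u) ∈ addU RIA names u := by
  cases R <;> simp_all [addU, Role.name]

lemma subset_addU (RIA : List (Role × Role)) (names : Finset ℕ) (u : ℕ) :
    RIA ⊆ addU RIA names u :=
  fun _ hp => by simp [addU, hp]

def internalisedNonSubsumption (T : Terminology) (u : ℕ) (C D : DLConcept) : DLConcept :=
  .and (.and (.and C (.neg D)) (CT T)) (.all (.atom u) (CT T))

namespace Interp

variable (I : Interp)

lemma rSem_Inv (R : Role) (x y : I.Dom) : I.rSem R.Inv x y ↔ I.rSem R y x := by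
  cases R <;> rfl

lemma modelsRH_iff {RIA : List (Role × Role)} :
    I.ModelsRH RIA ↔ ∀ p ∈ RIA, ∀ x y, I.rSem p.1 x y → I.rSem p.2 x y := by
  refine ⟨fun h p hp => h p.1 p.2 (.single (.inl hp)), fun h R R' hRR' => ?_⟩
  induction hRR' with
  | refl => exact fun _ _ => id
  | tail _ hstep ih =>
    rcases hstep with hp | hp
    · exact fun x y hxy => h _ hp x y (ih x y hxy)
    · exact fun x y hxy =>
        (I.rSem_Inv _ y x).mp (h _ hp y x ((I.rSem_Inv _ y x).mpr (ih x y hxy)))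

variable {I}

lemma ModelsRH.mono {RIA RIA' : List (Role × Role)} (h : I.ModelsRH RIA') (hsub : RIA ⊆ RIA') :
    I.ModelsRH RIA :=
  I.modelsRH_iff.mpr fun p hp => I.modelsRH_iff.mp h p (hsub hp)

lemma mem_cSem_CT {T : Terminology} {y : I.Dom} :
    y ∈ I.cSem (CT T) ↔ ∀ p ∈ T, y ∈ I.cSem p.1 → y ∈ I.cSem p.2 := by
  induction T with
  | nil => simp [CT, cSem]
  | cons p T ih =>
    simp only [CT_cons, cSem, Set.mem_inter_iff, Set.mem_union, Set.mem_compl_iff, ih,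
      List.forall_mem_cons, ← imp_iff_not_or]

lemma modelsT_iff_forall_mem_CT {T : Terminology} : I.ModelsT T ↔ ∀ y, y ∈ I.cSem (CT T) := by
  simp only [mem_cSem_CT]
  exact ⟨fun h y p hp => @h p hp y, fun h p hp y => h y p hp⟩

lemma mem_cSem_internalisedNonSubsumption {T : Terminology} {u : ℕ} {C D : DLConcept}
    {x : I.Dom} :
    x ∈ I.cSem (internalisedNonSubsumption T u C D) ↔
      x ∈ I.cSem C ∧ x ∉ I.cSem D ∧ x ∈ I.cSem (CT T) ∧
        ∀ y, I.rI u x y → y ∈ I.cSem (CT T) := by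
  simp only [internalisedNonSubsumption, cSem, rSem, Set.mem_inter_iff, Set.mem_compl_iff,
    Set.mem_ofPred_eq, and_assoc]

abbrev restrict (I : Interp) (S : Set I.Dom) (hS : S.Nonempty) : Interp where
  Dom := S
  dom_nonempty := hS.to_subtype
  cI n := {y | y.1 ∈ I.cI n}
  rI r y z := I.rI r y z

def SuccClosed (I : Interp) (names : Finset ℕ) (S : Set I.Dom) : Prop :=
  ∀ R : Role, R.name ∈ names → ∀ y ∈ S, ∀ z, I.rSem R y z → z ∈ S

section Restrict

variable {S : Set I.Dom} {hS : S.Nonempty}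

lemma restrict_rSem (R : Role) (y z : S) : (I.restrict S hS).rSem R y z ↔ I.rSem R y z := by
  cases R <;> rfl

lemma Good.restrict {Rp : Set ℕ} (h : I.Good Rp) : (I.restrict S hS).Good Rp :=
  fun r hr _ _ _ hab hbc => h r hr hab hbc

lemma ModelsRH.restrict {RIA : List (Role × Role)} (h : I.ModelsRH RIA) :
    (I.restrict S hS).ModelsRH RIA :=
  fun R R' hRR' y z hyz =>
    (restrict_rSem R' y z).mpr (h R R' hRR' y z ((restrict_rSem R y z).mp hyz))

variable {names : Finset ℕ}

lemma mk_restrict_succ (hcl : I.SuccClosed names S) {R : Role} (hR : R.name ∈ names)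
    {C : DLConcept} (hC : ∀ z : S, z ∈ (I.restrict S hS).cSem C ↔ z.1 ∈ I.cSem C) (y : S) :
    Cardinal.mk {z // (I.restrict S hS).rSem R y z ∧ z ∈ (I.restrict S hS).cSem C} =
      Cardinal.mk {z // I.rSem R y z ∧ z ∈ I.cSem C} :=
  Cardinal.mk_congr
    { toFun := fun z => ⟨z.1.1, (restrict_rSem R y z.1).mp z.2.1, (hC z.1).mp z.2.2⟩
      invFun := fun z => ⟨⟨z.1, hcl R hR y y.2 z.1 z.2.1⟩, (restrict_rSem R y _).mpr z.2.1,
        (hC _).mpr z.2.2⟩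
      left_inv := fun _ => rfl
      right_inv := fun _ => rfl }

lemma mem_restrict_cSem (hcl : I.SuccClosed names S) {E : DLConcept} (hE : E.roleNames ⊆ names)
    (y : S) : y ∈ (I.restrict S hS).cSem E ↔ y.1 ∈ I.cSem E := by
  induction E generalizing y with
  | top | bot | atom => exact Iff.rfl
  | neg C ih => exact not_congr (ih hE y)
  | and C D ihC ihD =>
    obtain ⟨hC, hD⟩ := Finset.union_subset_iff.mp hE
    exact and_congr (ihC hC y) (ihD hD y)
  | or C D ihC ihD =>
    obtain ⟨hC, hD⟩ := Finset.union_subset_iff.mp hE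
    exact or_congr (ihC hC y) (ihD hD y)
  | all R C ih =>
    obtain ⟨hR, hC⟩ := Finset.insert_subset_iff.mp hE
    refine ⟨fun h z hz => ?_, fun h z hz => (ih hC z).mpr (h z ((restrict_rSem R y z).mp hz))⟩
    have hzS := hcl R hR y y.2 z hz
    exact (ih hC ⟨z, hzS⟩).mp (h ⟨z, hzS⟩ ((restrict_rSem R y _).mpr hz))
  | ex R C ih =>
    obtain ⟨hR, hC⟩ := Finset.insert_subset_iff.mp hE
    refine ⟨fun ⟨z, hyz, hz⟩ => ⟨z, (restrict_rSem R y z).mp hyz, (ih hC z).mp hz⟩,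
      fun ⟨z, hyz, hz⟩ => ?_⟩
    have hzS := hcl R hR y y.2 z hyz
    exact ⟨⟨z, hzS⟩, (restrict_rSem R y _).mpr hyz, (ih hC ⟨z, hzS⟩).mpr hz⟩
  | atleast n R C ih =>
    obtain ⟨hR, hC⟩ := Finset.insert_subset_iff.mp hE
    exact iff_of_eq (congrArg ((n : Cardinal) ≤ ·) (mk_restrict_succ hcl hR (ih hC) y))
  | atmost n R C ih =>
    obtain ⟨hR, hC⟩ := Finset.insert_subset_iff.mp hE
    exact iff_of_eq (congrArg (· ≤ (n : Cardinal)) (mk_restrict_succ hcl hR (ih hC) y))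

end Restrict

lemma succClosed_insert_rI {u : ℕ} {names : Finset ℕ} (hu : Transitive (I.rI u))
    (h : ∀ R : Role, R.name ∈ names → ∀ y z, I.rSem R y z → I.rI u y z) (x : I.Dom) :
    I.SuccClosed names (insert x {y | I.rI u x y}) := by
  rintro R hR y (rfl | hy) z hyz
  · exact Or.inr (h R hR y z hyz)
  · exact Or.inr (hu hy (h R hR y z hyz))

lemma ModelsRH.rI_of_rSem_addU {RIA : List (Role × Role)} {names : Finset ℕ} {u : ℕ}
    (h : I.ModelsRH (addU RIA names u)) {R : Role} (hR : R.name ∈ names) (y z : I.Dom)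
    (hyz : I.rSem R y z) : I.rI u y z :=
  I.modelsRH_iff.mp h _ (mem_addU_of_name_mem hR) y z hyz

section UpdateRole

variable {u : ℕ} {ρ : I.Dom → I.Dom → Prop}

abbrev updateRole (I : Interp) (u : ℕ) (ρ : I.Dom → I.Dom → Prop) : Interp :=
  { I with rI := Function.update I.rI u ρ }

lemma updateRole_rSem_of_name_ne {R : Role} (h : R.name ≠ u) :
    (I.updateRole u ρ).rSem R = I.rSem R := by
  cases R <;> simp_all [rSem, updateRole, Role.name]

lemma updateRole_cSem_of_not_mem {E : DLConcept} (h : u ∉ E.roleNames) :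
    (I.updateRole u ρ).cSem E = I.cSem E := by
  induction E with
  | top | bot | atom => rfl
  | neg C ih => simp only [cSem, ih h]
  | and C D ihC ihD | or C D ihC ihD =>
    simp only [DLConcept.roleNames, Finset.mem_union, not_or] at h
    simp only [cSem, ihC h.1, ihD h.2]
  | all R C ih | ex R C ih | atleast n R C ih | atmost n R C ih =>
    simp only [DLConcept.roleNames, Finset.mem_insert, not_or] at h
    simp only [cSem, updateRole_rSem_of_name_ne (Ne.symm h.1), ih h.2]

lemma Good.updateRole {Rp : Set ℕ} (h : I.Good Rp) (hρ : Transitive ρ) :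
    (I.updateRole u ρ).Good Rp := by
  intro r hr
  rcases eq_or_ne r u with rfl | hru
  · simpa [Interp.updateRole] using hρ
  · simpa [Interp.updateRole, hru] using h r hr

lemma ModelsRH.updateRole_top_addU {RIA : List (Role × Role)} (h : I.ModelsRH RIA)
    (hu : u ∉ riaRoleNames RIA) (names : Finset ℕ) :
    (I.updateRole u fun _ _ => True).ModelsRH (addU RIA names u) := by
  refine (modelsRH_iff _).mpr fun p hp x y hxy => ?_
  simp only [addU, List.mem_append, List.mem_map] at hp
  rcases hp with (hp | ⟨r, -, rfl⟩) | ⟨r, -, rfl⟩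
  · have hname : ∀ R : Role, R = p.1 ∨ R = p.2 → R.name ≠ u := by
      rintro R hR rfl
      exact hu (mem_riaRoleNames.mpr ⟨p, hp, hR.imp (congrArg _) (congrArg _)⟩)
    rw [updateRole_rSem_of_name_ne (hname _ (.inl rfl))] at hxy
    rw [updateRole_rSem_of_name_ne (hname _ (.inr rfl))]
    exact (modelsRH_iff _).mp h p hp x y hxy
  all_goals simp [rSem]

end UpdateRole

end Interp

open Interp

theorem not_satisfiable_of_subsumesT {Rp : Set ℕ} {RIA : List (Role × Role)} {T : Terminology}
    {C D : DLConcept} {u : ℕ} {names : Finset ℕ} (hu : u ∈ Rp)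
    (hnames : C.roleNames ∪ D.roleNames ∪ termRoleNames T ⊆ names)
    (h : SubsumesT Rp RIA T C D) :
    ¬ Satisfiable Rp (addU RIA names u) (internalisedNonSubsumption T u C D) := by
  rintro ⟨I, hgood, hrh, x, hx⟩
  obtain ⟨hxC, hxD, hxCT, hxU⟩ := mem_cSem_internalisedNonSubsumption.mp hx
  simp only [Finset.union_subset_iff] at hnames
  obtain ⟨⟨hC, hD⟩, hT⟩ := hnames
  set S := insert x {y | I.rI u x y}
  have hcl : I.SuccClosed names S :=
    succClosed_insert_rI (hgood u hu) (fun _ hR => hrh.rI_of_rSem_addU hR) x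
  have hS : S.Nonempty := ⟨x, Set.mem_insert x _⟩
  let x' : S := ⟨x, Set.mem_insert x _⟩
  have hJT : (I.restrict S hS).ModelsT T := by
    refine modelsT_iff_forall_mem_CT.mpr fun y => ?_
    rw [mem_restrict_cSem hcl ((roleNames_CT T).symm ▸ hT)]
    rcases y.2 with hy | hy
    · exact hy ▸ hxCT
    · exact hxU _ hy
  have hx'D : x' ∈ (I.restrict S hS).cSem D :=
    h _ hgood.restrict (hrh.mono (subset_addU RIA names u)).restrict hJT
      ((mem_restrict_cSem hcl hC x').mpr hxC)
  exact hxD ((mem_restrict_cSem hcl hD x').mp hx'D)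

theorem satisfiable_of_not_subsumesT {Rp : Set ℕ} {RIA : List (Role × Role)} {T : Terminology}
    {C D : DLConcept} {u : ℕ} (huC : u ∉ C.roleNames) (huD : u ∉ D.roleNames)
    (huT : u ∉ termRoleNames T) (huRIA : u ∉ riaRoleNames RIA) (names : Finset ℕ)
    (h : ¬ SubsumesT Rp RIA T C D) :
    Satisfiable Rp (addU RIA names u) (internalisedNonSubsumption T u C D) := by
  simp only [SubsumesT, not_forall, Set.not_subset] at h
  obtain ⟨I, hgood, hrh, hT, x, hxC, hxD⟩ := h
  rw [modelsT_iff_forall_mem_CT] at hT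
  have huCT : u ∉ (CT T).roleNames := (roleNames_CT T).symm ▸ huT
  refine ⟨I.updateRole u fun _ _ => True, hgood.updateRole fun _ _ _ _ _ => trivial,
    hrh.updateRole_top_addU huRIA names, x, ?_⟩
  rw [mem_cSem_internalisedNonSubsumption, updateRole_cSem_of_not_mem huC,
    updateRole_cSem_of_not_mem huD, updateRole_cSem_of_not_mem huCT]
  exact ⟨hxC, hxD, hT x, fun y _ => hT y⟩

theorem internalisation_subs_general (Rp : Set ℕ) (RIA : List (Role × Role)) (T : Terminology)
    (C D : DLConcept)
    (u : ℕ) (hu : u ∈ Rp)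
    (hfresh : u ∉ C.roleNames ∪ D.roleNames ∪ termRoleNames T ∪ riaRoleNames RIA) :
    SubsumesT Rp RIA T C D ↔
      ¬ Satisfiable Rp
          (addU RIA (C.roleNames ∪ D.roleNames ∪ termRoleNames T ∪ riaRoleNames RIA) u)
          (DLConcept.and (DLConcept.and (DLConcept.and C (DLConcept.neg D)) (CT T))
            (DLConcept.all (Role.atom u) (CT T))) := by
  refine ⟨not_satisfiable_of_subsumesT hu Finset.subset_union_left, fun hunsat => ?_⟩
  simp only [Finset.mem_union, not_or] at hfresh
  obtain ⟨⟨⟨huC, huD⟩, huT⟩, huRIA⟩ := hfresh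
  by_contra hsub
  exact hunsat (satisfiable_of_not_subsumesT huC huD huT huRIA _ hsub)

/-- **Internalisation, subsumption.** With `C_T` and the fresh transitive
role name `U = u` as in the internalisation lemma, `D` subsumes `C` w.r.t. `T` and `R⁺`
iff `C ⊓ ¬D ⊓ C_T ⊓ ∀U.C_T` is unsatisfiable w.r.t. `R_U⁺`. -/
theorem internalisation_subs (Rp : Set ℕ) (RIA : List (Role × Role)) (T : Terminology)
    (C D : DLConcept) (hC : C.IsSHIQ Rp RIA) (hD : D.IsSHIQ Rp RIA)
    (hT : ∀ p ∈ T, p.1.IsSHIQ Rp RIA ∧ p.2.IsSHIQ Rp RIA)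
    (u : ℕ) (hu : u ∈ Rp)
    (hfresh : u ∉ C.roleNames ∪ D.roleNames ∪ termRoleNames T ∪ riaRoleNames RIA) :
    SubsumesT Rp RIA T C D ↔
      ¬ Satisfiable Rp
          (addU RIA (C.roleNames ∪ D.roleNames ∪ termRoleNames T ∪ riaRoleNames RIA) u)
          (DLConcept.and (DLConcept.and (DLConcept.and C (DLConcept.neg D)) (CT T))
            (DLConcept.all (Role.atom u) (CT T))) :=
  internalisation_subs_general Rp RIA T C D u hu hfresh
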